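/- arXiv:1705.03066 — 7 statements merged into one kernel-verified Lean document; each statement's English description precedes it below -/
import Mathlib

section
/- Let R be a commutative ring and a : ℤ → R a function with a(−1) = 1 and a(k) = 0 for all k < −1. Then for every integer m ≥ 1, the alternating sum ∑_{s=0}^{m} (−1)^s · a(m−1−s) · D_s equals 0, where D_s is the determinant of the s × s matrix with (i,j) entry a(j−i). (Lemma 2.2 of the paper.) -/
/-!
Let `T` be the Toeplitz matrix `(a (j - i))` of size `m + 1`. Pairing column `m - 1` of `T` with
the cofactors of its last column gives zero (expansion by alien cofactors). Deleting row `i` and the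
last column of `T` leaves a block upper triangular matrix whose diagonal blocks are the Toeplitz
matrix of size `i` and a Toeplitz matrix with `a (-1) = 1` on the diagonal and zeros below it, so
that cofactor is `± D_i`, and the vanishing sum is the one in the theorem.
-/

open Matrix

def toeplitz {R : Type*} (a : ℤ → R) (n : ℕ) : Matrix (Fin n) (Fin n) R :=
  of fun i j => a (j - i)

@[simp]
theorem toeplitz_apply {R : Type*} (a : ℤ → R) {n : ℕ} (i j : Fin n) :
    toeplitz a n i j = a (j - i) := rfl

section

variable {R : Type*} [CommRing R]

theorem sum_mul_det_submatrix_succAbove_castSucc_eq_zero {n : ℕ}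
    (A : Matrix (Fin (n + 1)) (Fin (n + 1)) R) {j : Fin (n + 1)} (hj : j ≠ Fin.last n) :
    ∑ i : Fin (n + 1),
      (-1) ^ (i : ℕ) * A i j * (A.submatrix i.succAbove Fin.castSucc).det = 0 := by
  have hcof := congr_fun₂ (adjugate_mul A) (Fin.last n) j
  simp only [mul_apply, adjugate_fin_succ_eq_det_submatrix, Fin.succAbove_last, Matrix.smul_apply,
    one_apply_ne hj.symm, smul_zero, Fin.val_last] at hcof
  have hsign : ((-1 : R) ^ n) ^ 2 = 1 := by rw [← pow_mul, pow_mul', neg_one_sq, one_pow]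
  calc _ = (-1) ^ n * ∑ i : Fin (n + 1),
        (-1) ^ (i + n : ℕ) * (A.submatrix i.succAbove Fin.castSucc).det * A i j := by
        rw [Finset.mul_sum]
        refine Finset.sum_congr rfl fun i _ => ?_
        linear_combination
          -(-1) ^ (i : ℕ) * A i j * (A.submatrix i.succAbove Fin.castSucc).det * hsign
    _ = 0 := by rw [hcof, mul_zero]

variable {a : ℤ → R}

theorem det_toeplitz_comp_sub_one (h1 : a (-1) = 1) (h2 : ∀ k : ℤ, k < -1 → a k = 0)
    (n : ℕ) :
    (toeplitz (fun k => a (k - 1)) n).det = 1 := by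
  rw [det_of_isUpperTriangular]
  · simp [h1]
  · intro i j hji
    have : (j : ℕ) < i := hji
    exact h2 _ (by omega)

theorem toeplitz_submatrix_succAbove_finSumFinEquiv (h2 : ∀ k : ℤ, k < -1 → a k = 0)
    (k n : ℕ) (hk : k < k + n + 1) :
    (toeplitz a (k + n + 1)).submatrix (Fin.succAbove ⟨k, hk⟩ ∘ finSumFinEquiv)
        (Fin.castSucc ∘ finSumFinEquiv) =
      fromBlocks (toeplitz a k) (of fun (r : Fin k) (c : Fin n) => a (k + c - r)) 0
        (toeplitz (fun l => a (l - 1)) n) := by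
  ext (p | q) (p' | q')
  · simp [Fin.succAbove_of_castSucc_lt, Fin.lt_def]
  · simp [Fin.succAbove_of_castSucc_lt, Fin.lt_def]
  · simp [Fin.succAbove_of_le_castSucc, Fin.le_def]
    exact h2 _ (by omega)
  · simp [Fin.succAbove_of_le_castSucc, Fin.le_def]
    congr 1
    ring

theorem det_toeplitz_submatrix_succAbove_castSucc (h1 : a (-1) = 1)
    (h2 : ∀ k : ℤ, k < -1 → a k = 0) {m : ℕ} (i : Fin (m + 1)) :
    ((toeplitz a (m + 1)).submatrix i.succAbove Fin.castSucc).det = (toeplitz a i).det := by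
  obtain ⟨k, hk⟩ := i
  obtain ⟨n, rfl⟩ := Nat.exists_eq_add_of_le (Nat.le_of_lt_succ hk)
  rw [← det_submatrix_equiv_self finSumFinEquiv, submatrix_submatrix,
    toeplitz_submatrix_succAbove_finSumFinEquiv h2, det_fromBlocks_zero₂₁,
    det_toeplitz_comp_sub_one h1 h2, mul_one]

end

/-- Lemma 2.2: if `a (-1) = 1` and `a k = 0` for `k < -1`, then for `m ≥ 1`,
`∑_{s=0}^{m} (-1)^s ⬝ a (m-1-s) ⬝ det (a (j-i))_{i,j=1..s} = 0`. -/
theorem stmt0 {R : Type*} [CommRing R] (a : ℤ → R)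
    (h1 : a (-1) = 1) (h2 : ∀ k : ℤ, k < -1 → a k = 0)
    (m : ℕ) (hm : 1 ≤ m) :
    ∑ s ∈ Finset.range (m + 1),
      (-1 : R) ^ s * a ((m : ℤ) - 1 - (s : ℤ)) *
        Matrix.det (Matrix.of fun i j : Fin s => a ((j : ℤ) - (i : ℤ))) = 0 := by
  obtain ⟨n, rfl⟩ := Nat.exists_eq_add_of_le' hm
  change ∑ s ∈ Finset.range (n + 2), _ * (toeplitz a s).det = 0
  rw [Finset.sum_range]
  refine (Finset.sum_congr rfl fun i _ => ?_).trans
    (sum_mul_det_submatrix_succAbove_castSucc_eq_zero (toeplitz a (n + 2))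
      (Fin.castSucc_lt_last (Fin.last n)).ne)
  rw [det_toeplitz_submatrix_succAbove_castSucc h1 h2]
  simp
end

section
/- Let R be a commutative ring, d ≥ 1 an integer, and a : ℤ → R a function with a(k) = 0 for all k < d−1 and a(d−1) = 1. With c(t) := (−1)^t times the determinant of the t × t matrix whose (i,j) entry is a(d+j−i) (and c(0) = 1), for all integers 0 ≤ i, j ≤ d−1 one has ∑_{k=j}^{d−1} c(d−1−k) · a(k+i−j) = 1 if i = j and = 0 otherwise. (The algebraic content of Lemma 2.4 of the paper: a counterclockwise bubble carrying i ordinary dots and one dual dot labelled j∨ evaluates to δ_{i,j}.) -/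
/-!
Write `M_t` for the `t × t` matrix `(a (d + q - p))_{p,q}`. As `a (d - 1) = 1` and `a` vanishes
below `d - 1`, `M_t` is lower Hessenberg with ones on the subdiagonal, so its first column has
only two nonzero entries. Expanding along it (after letting the top row vary) gives
`det M_{n+1} = ∑_{s+t=n} (-1)^s a (d + s) det M_t`, which for `c_t = (-1)^t det M_t` says
`∑_{s+t=n} c_s a (d - 1 + t) = δ_{n,0}`: the power series `∑ c_t X^t` inverts
`∑ a (d - 1 + n) X^n`. The theorem is the coefficient of `X^(i-j)`, after the substitution
`t = d - 1 - k` and dropping the terms in which `a` vanishes.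
-/

open Matrix Finset

namespace DualDot

variable {R : Type*} (d : ℕ) (a : ℤ → R)

def bubbleMatrix (t : ℕ) : Matrix (Fin t) (Fin t) R :=
  of fun p q => a ((d : ℤ) + (q : ℤ) - (p : ℤ))

def bubbleMatrixWithTopRow (b : ℕ → R) (t : ℕ) : Matrix (Fin t) (Fin t) R :=
  of fun p q => if (p : ℕ) = 0 then b q else a ((d : ℤ) + (q : ℤ) - (p : ℤ))

lemma bubbleMatrix_eq_bubbleMatrixWithTopRow (t : ℕ) :
    bubbleMatrix d a t = bubbleMatrixWithTopRow d a (fun q => a (d + q)) t := by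
  ext p q
  by_cases hp : (p : ℕ) = 0 <;> simp [bubbleMatrix, bubbleMatrixWithTopRow, hp]

lemma submatrix_succ_bubbleMatrixWithTopRow (b : ℕ → R) (n : ℕ) :
    (bubbleMatrixWithTopRow d a b (n + 1)).submatrix Fin.succ Fin.succ = bubbleMatrix d a n := by
  ext p q
  simp only [bubbleMatrixWithTopRow, bubbleMatrix, submatrix_apply, of_apply, Fin.val_succ,
    Nat.add_one_ne_zero, if_false]
  congr 1
  push_cast
  ring

lemma submatrix_succAbove_one_bubbleMatrixWithTopRow (b : ℕ → R) (n : ℕ) :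
    (bubbleMatrixWithTopRow d a b (n + 2)).submatrix (Fin.succAbove 1) Fin.succ =
      bubbleMatrixWithTopRow d a (fun q => b (q + 1)) (n + 1) := by
  ext p q
  induction p using Fin.cases with
  | zero => simp [bubbleMatrixWithTopRow]
  | succ p =>
    have : (1 : Fin (n + 2)).succAbove p.succ = p.succ.succ :=
      Fin.succAbove_of_le_castSucc _ _ (by simp [Fin.le_def])
    simp only [submatrix_apply, this, bubbleMatrixWithTopRow, of_apply, Fin.val_succ,
      Nat.add_one_ne_zero, if_false]
    congr 1
    push_cast
    ring

variable {d a} [CommRing R]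

lemma det_bubbleMatrixWithTopRow_succ_succ (h0 : ∀ k : ℤ, k < (d : ℤ) - 1 → a k = 0)
    (h1 : a ((d : ℤ) - 1) = 1) (b : ℕ → R) (n : ℕ) :
    (bubbleMatrixWithTopRow d a b (n + 2)).det =
      b 0 * (bubbleMatrix d a (n + 1)).det -
        (bubbleMatrixWithTopRow d a (fun q => b (q + 1)) (n + 1)).det := by
  have top : bubbleMatrixWithTopRow d a b (n + 2) 0 0 = b 0 := by
    simp [bubbleMatrixWithTopRow]
  have subdiag : bubbleMatrixWithTopRow d a b (n + 2) 1 0 = 1 := by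
    simpa [bubbleMatrixWithTopRow] using h1
  have below_subdiag (p : Fin n) : bubbleMatrixWithTopRow d a b (n + 2) p.succ.succ 0 = 0 := by
    simp only [bubbleMatrixWithTopRow, of_apply, Fin.val_succ, Nat.add_one_ne_zero, if_false,
      Fin.val_zero]
    exact h0 _ (by push_cast; omega)
  rw [det_succ_column_zero, Fin.sum_univ_succ, Fin.sum_univ_succ]
  simp only [below_subdiag, mul_zero, zero_mul, sum_const_zero, add_zero, Fin.succ_zero_eq_one,
    top, subdiag, Fin.succAbove_zero, submatrix_succ_bubbleMatrixWithTopRow,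
    submatrix_succAbove_one_bubbleMatrixWithTopRow, Fin.val_zero, Fin.val_one, pow_zero, pow_one]
  ring

lemma det_bubbleMatrixWithTopRow_succ (h0 : ∀ k : ℤ, k < (d : ℤ) - 1 → a k = 0)
    (h1 : a ((d : ℤ) - 1) = 1) (n : ℕ) (b : ℕ → R) :
    (bubbleMatrixWithTopRow d a b (n + 1)).det =
      ∑ x ∈ antidiagonal n, (-1) ^ x.1 * b x.1 * (bubbleMatrix d a x.2).det := by
  induction n generalizing b with
  | zero => simp [bubbleMatrixWithTopRow]
  | succ n ih =>
    rw [det_bubbleMatrixWithTopRow_succ_succ h0 h1, ih, Nat.sum_antidiagonal_succ,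
      sub_eq_add_neg, ← sum_neg_distrib]
    simp only [pow_succ, pow_zero]
    congr 1
    · ring
    · exact sum_congr rfl fun x _ => by ring

lemma det_bubbleMatrix_succ (h0 : ∀ k : ℤ, k < (d : ℤ) - 1 → a k = 0)
    (h1 : a ((d : ℤ) - 1) = 1) (n : ℕ) :
    (bubbleMatrix d a (n + 1)).det =
      ∑ x ∈ antidiagonal n, (-1) ^ x.1 * a (d + x.1) * (bubbleMatrix d a x.2).det := by
  rw [bubbleMatrix_eq_bubbleMatrixWithTopRow, det_bubbleMatrixWithTopRow_succ h0 h1]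

variable (d a) in
def coeff (t : ℕ) : R := (-1) ^ t * (bubbleMatrix d a t).det

lemma coeff_succ (h0 : ∀ k : ℤ, k < (d : ℤ) - 1 → a k = 0)
    (h1 : a ((d : ℤ) - 1) = 1) (n : ℕ) :
    coeff d a (n + 1) = -∑ x ∈ antidiagonal n, coeff d a x.2 * a (d + x.1) := by
  rw [coeff, det_bubbleMatrix_succ h0 h1, mul_sum, ← sum_neg_distrib]
  refine sum_congr rfl fun ⟨i, j⟩ hij => ?_
  obtain rfl : i + j = n := mem_antidiagonal.mp hij
  have : (-1 : R) ^ i * (-1) ^ i = 1 := by rw [← mul_pow]; simp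
  rw [coeff, pow_succ, pow_add]
  linear_combination (-(-1) ^ j * a (d + i) * (bubbleMatrix d a j).det) * this

lemma sum_antidiagonal_coeff_mul (h0 : ∀ k : ℤ, k < (d : ℤ) - 1 → a k = 0)
    (h1 : a ((d : ℤ) - 1) = 1) (n : ℕ) :
    ∑ x ∈ antidiagonal n, coeff d a x.1 * a (d - 1 + x.2) = if n = 0 then 1 else 0 := by
  cases n with
  | zero => simp [coeff, h1]
  | succ n =>
    rw [Nat.sum_antidiagonal_succ', coeff_succ h0 h1, ← Nat.sum_antidiagonal_swap]
    simp [h1]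

lemma sum_range_coeff_mul (h0 : ∀ k : ℤ, k < (d : ℤ) - 1 → a k = 0)
    (h1 : a ((d : ℤ) - 1) = 1) {N : ℕ} {m : ℤ} (hm : m < N) :
    ∑ u ∈ range N, coeff d a u * a (d - 1 + m - u) = if m = 0 then 1 else 0 := by
  rcases lt_or_ge m 0 with hneg | hnonneg
  · rw [if_neg hneg.ne]
    exact sum_eq_zero fun u _ => by rw [h0 _ (by omega), mul_zero]
  lift m to ℕ using hnonneg
  have hsub : range (m + 1) ⊆ range N := range_subset_range.mpr (by omega)
  rw [← sum_subset hsub fun u hu hu' => ?_]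
  · simp only [Nat.cast_eq_zero]
    rw [← sum_antidiagonal_coeff_mul h0 h1, Nat.sum_antidiagonal_eq_sum_range_succ_mk]
    refine sum_congr rfl fun u hu => ?_
    rw [mem_range] at hu
    congr 2
    omega
  · rw [mem_range] at hu hu'
    rw [h0 _ (by omega), mul_zero]

end DualDot

open DualDot in
theorem stmt3_general {R : Type*} [CommRing R] (d : ℕ) (hd : 1 ≤ d) (a : ℤ → R)
    (h0 : ∀ k : ℤ, k < (d : ℤ) - 1 → a k = 0) (h1 : a ((d : ℤ) - 1) = 1)
    (i j : ℕ) (hi : i ≤ d - 1) :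
    ∑ k ∈ Finset.Icc j (d - 1),
      ((-1 : R) ^ (d - 1 - k) *
          Matrix.det (Matrix.of fun p q : Fin (d - 1 - k) => a ((d : ℤ) + (q : ℤ) - (p : ℤ)))) *
        a ((k : ℤ) + (i : ℤ) - (j : ℤ)) =
      (if i = j then 1 else 0) := by
  calc _ = ∑ u ∈ Finset.range (d - j), coeff d a u * a (d - 1 + ((i : ℤ) - j) - u) := by
        refine Finset.sum_nbij' (fun k => d - 1 - k) (fun u => d - 1 - u) ?_ ?_ ?_ ?_
          fun k hk => by rw [Finset.mem_Icc] at hk; congr 2; omega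
        all_goals intro k hk; simp only [Finset.mem_Icc, Finset.mem_range] at hk ⊢; omega
    _ = if i = j then 1 else 0 := by
        rw [sum_range_coeff_mul h0 h1 (by omega)]
        simp only [sub_eq_zero, Nat.cast_inj]

/-- Lemma 2.4 (algebraic content): with `a k` the value of a counterclockwise bubble with `k`
dots and `c t = (-1)^t det (a (d+j-i))_{i,j=1..t}`, for `0 ≤ i, j ≤ d-1` one has
`∑_{k=j}^{d-1} c (d-1-k) ⬝ a (k+i-j) = δ_{i,j}`. -/
theorem stmt3 {R : Type*} [CommRing R] (d : ℕ) (hd : 1 ≤ d) (a : ℤ → R)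
    (h0 : ∀ k : ℤ, k < (d : ℤ) - 1 → a k = 0) (h1 : a ((d : ℤ) - 1) = 1)
    (i j : ℕ) (hi : i ≤ d - 1) (hj : j ≤ d - 1) :
    ∑ k ∈ Finset.Icc j (d - 1),
      ((-1 : R) ^ (d - 1 - k) *
          Matrix.det (Matrix.of fun p q : Fin (d - 1 - k) => a ((d : ℤ) + (q : ℤ) - (p : ℤ)))) *
        a ((k : ℤ) + (i : ℤ) - (j : ℤ)) =
      (if i = j then 1 else 0) :=
  stmt3_general d hd a h0 h1 i j hi
end

section
/- Let A be a ring and s, x, y ∈ A satisfy s·s = 1, x·y = y·x, and s·x = y·s − 1. Then for every integer a ≥ 0, s·x^a·s = y^a − ∑_{u+v=a−1} x^u·s·x^v − ∑_{u+v=a−1} ∑_{p+q=v−1} x^{u+p}·y^q, where the sums are over pairs of nonnegative integers with the indicated sums. (The displayed identity in the proof of Lemma 5.6 of the paper, also used in the proof of Lemma 5.11.) -/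
/-!
The relation `y * s = s * x + 1` says that the commuting operators "multiply by `y` on the left"
and "multiply by `x` on the right" differ by `1` on `s`; iterating it gives
`y ^ n * s = s * x ^ n + ∑_{i+j=n-1} y ^ i * x ^ j`. Applied once to `s * x ^ a` and then once
more to each `y ^ v * s` in the resulting sum (using `s * s = 1` and `x * y = y * x` to reorder),
this yields the identity.
-/

open Finset

theorem pow_mul_eq_mul_pow_add_geom_sum₂ {A : Type*} [Ring A] {s x y : A}
    (h : y * s = s * x + 1) (n : ℕ) :
    y ^ n * s = s * x ^ n + ∑ i ∈ range n, y ^ i * x ^ (n - 1 - i) := by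
  induction n with
  | zero => simp
  | succ n ih =>
    have hshift : ∑ i ∈ range n, y ^ (i + 1) * x ^ (n + 1 - 1 - (i + 1))
        = y * ∑ i ∈ range n, y ^ i * x ^ (n - 1 - i) := by
      rw [mul_sum]
      refine sum_congr rfl fun i _ => ?_
      rw [show n + 1 - 1 - (i + 1) = n - 1 - i by omega, pow_succ', mul_assoc]
    rw [sum_range_succ', hshift, pow_succ', mul_assoc, ih, mul_add, ← mul_assoc, h, pow_succ']
    simp only [pow_zero, one_mul, Nat.add_sub_cancel, Nat.sub_zero, add_mul, mul_assoc]
    abel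

/-- The identity from the proof of Lemma 5.6:
`s ⬝ x^a ⬝ s = y^a - ∑_{u+v=a-1} x^u ⬝ s ⬝ x^v - ∑_{u+v=a-1} ∑_{p+q=v-1} x^{u+p} ⬝ y^q`. -/
theorem stmt6 {A : Type*} [Ring A] (s x y : A)
    (hs : s * s = 1) (hxy : x * y = y * x) (hsx : s * x = y * s - 1)
    (a : ℕ) :
    s * x ^ a * s = y ^ a
      - (∑ u ∈ Finset.range a, x ^ u * s * x ^ (a - 1 - u))
      - ∑ u ∈ Finset.range a, ∑ p ∈ Finset.range (a - 1 - u),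
          x ^ (u + p) * y ^ (a - 1 - u - 1 - p) := by
  have hc : Commute x y := hxy
  have hys : y * s = s * x + 1 := sub_eq_iff_eq_add.mp hsx.symm
  have hpow (n : ℕ) : y ^ n * s = s * x ^ n + ∑ p ∈ range n, x ^ p * y ^ (n - 1 - p) := by
    rw [hc.geom_sum₂_comm, pow_mul_eq_mul_pow_add_geom_sum₂ hys]
  calc s * x ^ a * s = (y ^ a * s - ∑ u ∈ range a, x ^ u * y ^ (a - 1 - u)) * s := by
        rw [hpow, add_sub_cancel_right]
    _ = y ^ a - ∑ u ∈ range a, x ^ u * (y ^ (a - 1 - u) * s) := by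
        simp only [sub_mul, sum_mul, mul_assoc, hs, mul_one]
    _ = _ := by
        simp only [hpow, mul_add, mul_sum, sum_add_distrib, sub_add_eq_sub_sub, ← mul_assoc,
          ← pow_add]
end

section
/- Let A be a ring, B₀ ⊆ B ⊆ A subrings, and s, s', x, y ∈ A with s' ∈ B, x ∈ B, such that: s commutes with every element of B₀; x commutes with every element of B₀; s·s'·s = s'·s·s'; s·s = 1; x·y = y·x; and s·x = y·s − 1. Then: (i) for all b, b' ∈ B₀, the element s·b·s'·b'·s lies in the additive subgroup of A generated by {u·s·v : u, v ∈ B}; and (ii) for every b ∈ B₀ and every integer 0 ≤ a ≤ d−1 (d ≥ 1 any integer), the element s·b·x^a·s lies in the sum of that additive subgroup and the additive subgroups generated by {u·y^t : u ∈ B} for 0 ≤ t ≤ a. (Lemma 5.6 of the paper, modelling s = s_n, s' = s_{n−1}, x = x_n, y = x_{n+1}, B = H_n^λ, B₀ = H_{n−1}^λ inside A = H_{n+1}^λ.) -/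
/-!
Part (i): moving `s` past `b, b' ∈ B₀` and applying the braid relation gives
`s b s' b' s = b (s s' s) b' = (b s') s (s' b')`.

For part (ii), the relations `s x = y s - 1` and `x y = y x` give the commutation formula
`s xᵃ = yᵃ s - ∑_{i<a} xⁱ y^(a-1-i)`, hence, since `s² = 1`,
`s b xᵃ s = b yᵃ - ∑_{i<a} (b xⁱ) y^(a-1-i) s`. Each `c yᵗ s` with `c ∈ B` lies in
`B s B + ∑_{t' ≤ t} B y^t'` by induction on `t`: `c y^(t+1) s = (c yᵗ s) x + c yᵗ`, and this
sum is stable under right multiplication by `x ∈ B`.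
-/

open Finset

section CommutationFormula

variable {A : Type*} [Ring A]

theorem mul_pow_eq_pow_mul_sub_geom_sum₂ {s x y : A} (hxy : Commute x y)
    (hsx : s * x = y * s - 1) (n : ℕ) :
    s * x ^ n = y ^ n * s - ∑ i ∈ range n, x ^ i * y ^ (n - 1 - i) := by
  induction n with
  | zero => simp
  | succ n ih =>
    calc s * x ^ (n + 1) = (s * x) * x ^ n := by rw [pow_succ', mul_assoc]
      _ = y * (s * x ^ n) - x ^ n := by rw [hsx]; noncomm_ring
      _ = y ^ (n + 1) * s - (x ^ n + y * ∑ i ∈ range n, x ^ i * y ^ (n - 1 - i)) := by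
        rw [ih, pow_succ', mul_assoc, mul_sub]; abel
      _ = _ := by rw [Nat.add_sub_cancel, hxy.geom_sum₂_succ_eq]

theorem mul_pow_mul_eq_pow_sub_sum {s x y : A} (hxy : Commute x y)
    (hsx : s * x = y * s - 1) (hss : s * s = 1) (n : ℕ) :
    s * x ^ n * s = y ^ n - ∑ i ∈ range n, x ^ i * y ^ (n - 1 - i) * s := by
  rw [mul_pow_eq_pow_mul_sub_geom_sum₂ hxy hsx, sub_mul, sum_mul, mul_assoc, hss, mul_one]

end CommutationFormula

section Spans

variable {A : Type*} [Ring A] (B : Subring A)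

/-- `B·s·B`. -/
def sandwichSpan (s : A) : AddSubgroup A :=
  AddSubgroup.closure {z : A | ∃ u ∈ B, ∃ v ∈ B, z = u * s * v}

/-- `B·w`. -/
def leftSpan (w : A) : AddSubgroup A :=
  AddSubgroup.closure {z : A | ∃ u ∈ B, z = u * w}

/-- `B·s·B + ∑_{t ≤ a} B·yᵗ`. -/
def sandwichSpanAddPowSpans (s y : A) (a : ℕ) : AddSubgroup A :=
  sandwichSpan B s ⊔ ⨆ t ∈ Iic a, leftSpan B (y ^ t)

variable {B}

theorem mul_mem_sandwichSpan (s : A) {u v : A} (hu : u ∈ B) (hv : v ∈ B) :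
    u * s * v ∈ sandwichSpan B s :=
  AddSubgroup.subset_closure ⟨u, hu, v, hv, rfl⟩

theorem mul_mem_leftSpan (w : A) {u : A} (hu : u ∈ B) : u * w ∈ leftSpan B w :=
  AddSubgroup.subset_closure ⟨u, hu, rfl⟩

theorem map_mulRight_sandwichSpan_le (s : A) {x : A} (hx : x ∈ B) :
    (sandwichSpan B s).map (AddMonoidHom.mulRight x) ≤ sandwichSpan B s := by
  rw [sandwichSpan, AddMonoidHom.map_closure]
  refine AddSubgroup.closure_mono ?_
  rintro _ ⟨_, ⟨u, hu, v, hv, rfl⟩, rfl⟩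
  exact ⟨u, hu, v * x, B.mul_mem hv hx, by simp [mul_assoc]⟩

theorem map_mulRight_leftSpan_le {w x : A} (hx : x ∈ B) (hxw : Commute x w) :
    (leftSpan B w).map (AddMonoidHom.mulRight x) ≤ leftSpan B w := by
  rw [leftSpan, AddMonoidHom.map_closure]
  refine AddSubgroup.closure_mono ?_
  rintro _ ⟨_, ⟨u, hu, rfl⟩, rfl⟩
  exact ⟨u * x, B.mul_mem hu hx, by simp [mul_assoc, hxw.eq]⟩

variable (B) in
theorem leftSpan_pow_le_sandwichSpanAddPowSpans (s y : A) {t a : ℕ} (ht : t ≤ a) :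
    leftSpan B (y ^ t) ≤ sandwichSpanAddPowSpans B s y a :=
  le_sup_of_le_right <|
    le_iSup₂_of_le (f := fun t _ => leftSpan B (y ^ t)) t (mem_Iic.mpr ht) le_rfl

theorem mul_mem_sandwichSpanAddPowSpans {s x y z : A} {a : ℕ} (hx : x ∈ B) (hxy : Commute x y)
    (hz : z ∈ sandwichSpanAddPowSpans B s y a) : z * x ∈ sandwichSpanAddPowSpans B s y a := by
  suffices (sandwichSpanAddPowSpans B s y a).map (AddMonoidHom.mulRight x) ≤
      sandwichSpanAddPowSpans B s y a from this ⟨z, hz, rfl⟩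
  simp only [sandwichSpanAddPowSpans, AddSubgroup.map_sup, AddSubgroup.map_iSup]
  exact sup_le_sup (map_mulRight_sandwichSpan_le s hx)
    (iSup₂_mono fun t _ => map_mulRight_leftSpan_le hx (hxy.pow_right t))

theorem mul_pow_mul_mem_sandwichSpanAddPowSpans {s x y : A} (hx : x ∈ B) (hxy : Commute x y)
    (hys : y * s = s * x + 1) {a t : ℕ} (ht : t ≤ a) {c : A} (hc : c ∈ B) :
    c * y ^ t * s ∈ sandwichSpanAddPowSpans B s y a := by
  induction t with
  | zero =>
    rw [pow_zero, mul_one]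
    exact (le_sup_left : sandwichSpan B s ≤ _)
      (by simpa using mul_mem_sandwichSpan s hc B.one_mem)
  | succ t ih =>
    have hsplit : c * y ^ (t + 1) * s = c * y ^ t * s * x + c * y ^ t := by
      rw [pow_succ, mul_assoc, mul_assoc, hys]; noncomm_ring
    rw [hsplit]
    exact add_mem (mul_mem_sandwichSpanAddPowSpans hx hxy (ih (by omega)))
      (leftSpan_pow_le_sandwichSpanAddPowSpans B s y (by omega) (mul_mem_leftSpan _ hc))

theorem mul_mul_mul_mul_mem_sandwichSpan {s s' b b' : A} (hs' : s' ∈ B) (hb : b ∈ B)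
    (hb' : b' ∈ B) (hsb : Commute s b) (hsb' : Commute s b')
    (hbraid : s * s' * s = s' * s * s') :
    s * b * s' * b' * s ∈ sandwichSpan B s := by
  have hrewrite : s * b * s' * b' * s = b * s' * s * (s' * b') :=
    calc s * b * s' * b' * s = b * (s * s' * s) * b' := by
          rw [hsb.eq, mul_assoc (b * s * s') b' s, ← hsb'.eq]
          simp only [mul_assoc]
      _ = b * s' * s * (s' * b') := by rw [hbraid]; simp only [mul_assoc]
  rw [hrewrite]
  exact mul_mem_sandwichSpan s (B.mul_mem hb hs') (B.mul_mem hs' hb')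

theorem mul_mul_pow_mul_mem_sandwichSpanAddPowSpans {s x y b : A} (hx : x ∈ B) (hb : b ∈ B)
    (hsb : Commute s b) (hxy : Commute x y) (hsx : s * x = y * s - 1) (hss : s * s = 1)
    (a : ℕ) : s * b * x ^ a * s ∈ sandwichSpanAddPowSpans B s y a := by
  have hys : y * s = s * x + 1 := by rw [hsx]; noncomm_ring
  have hexpand : s * b * x ^ a * s =
      b * y ^ a - ∑ i ∈ range a, b * x ^ i * y ^ (a - 1 - i) * s := by
    rw [hsb.eq, mul_assoc b, mul_assoc b, mul_pow_mul_eq_pow_sub_sum hxy hsx hss, mul_sub,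
      mul_sum]
    simp only [mul_assoc]
  rw [hexpand]
  refine sub_mem (leftSpan_pow_le_sandwichSpanAddPowSpans B s y le_rfl (mul_mem_leftSpan _ hb))
    (sum_mem fun i hi => ?_)
  exact mul_pow_mul_mem_sandwichSpanAddPowSpans hx hxy hys (by grind)
    (B.mul_mem hb (B.pow_mem hx i))

end Spans

theorem stmt7_general {A : Type*} [Ring A] (B₀ B : Subring A) (hB : B₀ ≤ B)
    (d : ℕ)
    (s s' x y : A) (hs' : s' ∈ B) (hx : x ∈ B)
    (hsB₀ : ∀ b ∈ B₀, s * b = b * s)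
    (hbraid : s * s' * s = s' * s * s')
    (hss : s * s = 1) (hxy : x * y = y * x) (hsx : s * x = y * s - 1) :
    (∀ b ∈ B₀, ∀ b' ∈ B₀,
        s * b * s' * b' * s ∈
          AddSubgroup.closure {z : A | ∃ u ∈ B, ∃ v ∈ B, z = u * s * v}) ∧
    (∀ b ∈ B₀, ∀ a : ℕ, a ≤ d - 1 →
        s * b * x ^ a * s ∈
          AddSubgroup.closure {z : A | ∃ u ∈ B, ∃ v ∈ B, z = u * s * v} ⊔
            ⨆ t ∈ Finset.Iic a,
              AddSubgroup.closure {z : A | ∃ u ∈ B, z = u * y ^ t}) :=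
  ⟨fun b hb b' hb' => mul_mul_mul_mul_mem_sandwichSpan hs' (hB hb) (hB hb') (hsB₀ b hb)
      (hsB₀ b' hb') hbraid,
    fun b hb a _ => mul_mul_pow_mul_mem_sandwichSpanAddPowSpans hx (hB hb) (hsB₀ b hb) hxy hsx
      hss a⟩

/-- Lemma 5.6: (i) `s B₀ s' B₀ s ⊆ B s B` and
(ii) `s B₀ x^a s ⊆ B s B + ∑_{t ≤ a} B y^t` for `0 ≤ a ≤ d - 1`. -/
theorem stmt7 {A : Type*} [Ring A] (B₀ B : Subring A) (hB : B₀ ≤ B)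
    (d : ℕ) (hd : 1 ≤ d)
    (s s' x y : A) (hs' : s' ∈ B) (hx : x ∈ B)
    (hsB₀ : ∀ b ∈ B₀, s * b = b * s)
    (hxB₀ : ∀ b ∈ B₀, x * b = b * x)
    (hbraid : s * s' * s = s' * s * s')
    (hss : s * s = 1) (hxy : x * y = y * x) (hsx : s * x = y * s - 1) :
    (∀ b ∈ B₀, ∀ b' ∈ B₀,
        s * b * s' * b' * s ∈
          AddSubgroup.closure {z : A | ∃ u ∈ B, ∃ v ∈ B, z = u * s * v}) ∧
    (∀ b ∈ B₀, ∀ a : ℕ, a ≤ d - 1 →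
        s * b * x ^ a * s ∈
          AddSubgroup.closure {z : A | ∃ u ∈ B, ∃ v ∈ B, z = u * s * v} ⊔
            ⨆ t ∈ Finset.Iic a,
              AddSubgroup.closure {z : A | ∃ u ∈ B, z = u * y ^ t}) :=
  stmt7_general B₀ B hB d s s' x y hs' hx hsB₀ hbraid hss hxy hsx
end

section
/- Let A be a ring, B ⊆ A a subring, and s, x, y ∈ A with x ∈ B, such that y commutes with every element of B, s·s = 1, x·y = y·x, and s·x = y·s − 1. Let M be an abelian group and T : A → M an additive map such that T(u) = 0 for every u in the additive subgroup of A generated by {b·s·b' : b, b' ∈ B}. Then T(y·z) = T(z·y) for every z in the additive subgroup of A generated by {b·s·b' : b, b' ∈ B} ∪ {b·y^k : b ∈ B, k ∈ ℕ}. (Lemma 5.7 of the paper: the trace tr_{n+1} : H_{n+1}^λ → H_n^λ satisfies tr_{n+1}(x_{n+1}·z) = tr_{n+1}(z·x_{n+1}) for all z, since by the bimodule decomposition every element of H_{n+1}^λ lies in this additive subgroup.) -/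
/-!
Since `s² = 1`, the relation `y s = s x + 1` also gives `s y = x s + 1`. Hence for `b, b' ∈ B`,
both `y (b s b')` and `(b s b') y` equal `b b'` modulo `B s B`, which `T` kills; and `y` commutes
with every `b yᵏ`. The set of `z` with `T (y z) = T (z y)` is the kernel of an additive map, so
it contains the additive subgroup generated by these elements.
-/

section

variable {A : Type*} [Ring A]

theorem mul_eq_mul_add_one_of_mul_self_eq_one {s x y : A} (hss : s * s = 1)
    (hys : y * s = s * x + 1) : s * y = x * s + 1 :=
  calc s * y = s * (y * s) * s := by rw [mul_assoc, mul_assoc, hss, mul_one]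
    _ = x * s + 1 := by rw [hys, mul_add, ← mul_assoc, hss, one_mul, mul_one, add_mul, hss]

theorem mul_sandwich_eq {b b' s x y : A} (hb : Commute y b) (hys : y * s = s * x + 1) :
    y * (b * s * b') = b * s * (x * b') + b * b' := by
  rw [← mul_assoc, ← mul_assoc, hb.eq, mul_assoc b y, hys]
  noncomm_ring

theorem sandwich_mul_eq {b b' s x y : A} (hb' : Commute y b') (hsy : s * y = x * s + 1) :
    b * s * b' * y = b * x * s * b' + b * b' := by
  rw [mul_assoc, ← hb'.eq, ← mul_assoc, mul_assoc b s y, hsy]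
  noncomm_ring

end

theorem stmt8_general {A M : Type*} [Ring A] [AddCommGroup M] (B : Subring A)
    (s x y : A) (hx : x ∈ B)
    (hyB : ∀ b ∈ B, y * b = b * y)
    (hss : s * s = 1) (hsx : s * x = y * s - 1)
    (T : A →+ M)
    (hT : ∀ u ∈ AddSubgroup.closure {z : A | ∃ b ∈ B, ∃ b' ∈ B, z = b * s * b'}, T u = 0)
    (z : A)
    (hz : z ∈ AddSubgroup.closure
        ({w : A | ∃ b ∈ B, ∃ b' ∈ B, w = b * s * b'} ∪
          {w : A | ∃ b ∈ B, ∃ k : ℕ, w = b * y ^ k})) :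
    T (y * z) = T (z * y) := by
  have hys : y * s = s * x + 1 := by rw [hsx, sub_add_cancel]
  have hsy := mul_eq_mul_add_one_of_mul_self_eq_one hss hys
  have hT' : ∀ c ∈ B, ∀ c' ∈ B, T (c * s * c') = 0 := fun c hc c' hc' =>
    hT _ (AddSubgroup.subset_closure ⟨c, hc, c', hc', rfl⟩)
  suffices h : AddSubgroup.closure _ ≤
      (T.comp (AddMonoidHom.mulLeft y - AddMonoidHom.mulRight y)).ker by
    simpa [sub_eq_zero] using h hz
  rw [AddSubgroup.closure_le]
  rintro w (⟨b, hb, b', hb', rfl⟩ | ⟨b, hb, k, rfl⟩) <;> simp only [SetLike.mem_coe,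
    AddMonoidHom.mem_ker, AddMonoidHom.comp_apply, AddMonoidHom.sub_apply,
    AddMonoidHom.coe_mulLeft, AddMonoidHom.coe_mulRight, map_sub, sub_eq_zero]
  · rw [mul_sandwich_eq (hyB b hb) hys, sandwich_mul_eq (hyB b' hb' : Commute y b') hsy,
      map_add, map_add, hT' b hb _ (B.mul_mem hx hb'), hT' _ (B.mul_mem hb hx) b' hb']
  · rw [(Commute.mul_right (hyB b hb) (Commute.self_pow y k)).eq]

/-- Lemma 5.7: if the additive map `T` kills `B s B`, then `T (y ⬝ z) = T (z ⬝ y)` for every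
`z` in the additive subgroup generated by `B s B` together with the `b ⬝ y^k`. -/
theorem stmt8 {A M : Type*} [Ring A] [AddCommGroup M] (B : Subring A)
    (s x y : A) (hx : x ∈ B)
    (hyB : ∀ b ∈ B, y * b = b * y)
    (hss : s * s = 1) (hxy : x * y = y * x) (hsx : s * x = y * s - 1)
    (T : A →+ M)
    (hT : ∀ u ∈ AddSubgroup.closure {z : A | ∃ b ∈ B, ∃ b' ∈ B, z = b * s * b'}, T u = 0)
    (z : A)
    (hz : z ∈ AddSubgroup.closure
        ({w : A | ∃ b ∈ B, ∃ b' ∈ B, w = b * s * b'} ∪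
          {w : A | ∃ b ∈ B, ∃ k : ℕ, w = b * y ^ k})) :
    T (y * z) = T (z * y) :=
  stmt8_general B s x y hx hyB hss hsx T hT z hz
end

section
/- Let A be a ring, B₀ ⊆ B ⊆ A subrings, d ≥ 1 an integer, and s, s', x, y ∈ A with s' ∈ B, x ∈ B, such that: s and x each commute with every element of B₀; y commutes with every element of B; s·s'·s = s'·s·s'; s·s = 1; x·y = y·x; and s·x = y·s − 1. Let T : A → B and T₀ : B → B be additive maps such that: T(u) = 0 for every u in the additive subgroup of A generated by {b·s·b' : b, b' ∈ B}; T(b·y^j) = 0 for all b ∈ B and 0 ≤ j ≤ d−2; T(b·y^{d−1}) = b for all b ∈ B; T₀(u) = 0 for every u in the additive subgroup of B generated by {b₀·s'·b₀' : b₀, b₀' ∈ B₀}; T₀(b₀·x^j) = 0 for all b₀ ∈ B₀ and 0 ≤ j ≤ d−2; and T₀(b₀·x^{d−1}) = b₀ for all b₀ ∈ B₀. Then T(s·b·s) = T₀(b) for every b in the additive subgroup of B generated by {b₀·s'·b₀' : b₀, b₀' ∈ B₀} ∪ {b₀·x^m : b₀ ∈ B₀, 0 ≤ m ≤ d−1}.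 (Corollary 5.9 of the paper: tr_{n+1}(s_n·y·s_n) = tr_n(y) for all y ∈ H_n^λ, with s = s_n, s' = s_{n−1}, x = x_n, y = x_{n+1}, B = H_n^λ, B₀ = H_{n−1}^λ, T = tr_{n+1}, T₀ = tr_n, and the decomposition H_n^λ = H_{n−1}^λ s_{n−1} H_{n−1}^λ ⊕ ⊕_{j<d} H_{n−1}^λ x_n^j.) -/
/-!
Telescoping the relation `s x = y s - 1` gives `y^k s = s x^k + ∑_{i<k} x^(k-1-i) y^i`, so
`T (b y^k s) = 0` for `k < d`; since `s² = 1`, conjugating `b₀ x^m` by `s` therefore gives `b₀ y^m`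
up to terms killed by `T`. On `B₀ s' B₀` the braid relation moves the conjugate into `B s B`, where
both traces vanish.
-/

open Finset

theorem pow_mul_sub_mul_pow_eq_sum {R : Type*} [Ring R] (a b c : R) (n : ℕ) :
    b ^ n * a - a * c ^ n = ∑ i ∈ range n, b ^ i * (b * a - a * c) * c ^ (n - 1 - i) := by
  induction n with
  | zero => simp
  | succ n ih =>
    calc b ^ (n + 1) * a - a * c ^ (n + 1)
        = b * (b ^ n * a - a * c ^ n) + (b * a - a * c) * c ^ n := by
          rw [pow_succ' b, pow_succ' c]; noncomm_ring
      _ = _ := by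
        rw [ih, mul_sum, sum_range_succ']
        congr 1
        · refine sum_congr rfl fun i _ => ?_
          rw [show n + 1 - 1 - (i + 1) = n - 1 - i by omega, pow_succ']
          noncomm_ring
        · simp

theorem pow_mul_eq_mul_pow_add_sum {R : Type*} [Ring R] {s x y : R}
    (hsx : s * x = y * s - 1) (hxy : Commute x y) (n : ℕ) :
    y ^ n * s = s * x ^ n + ∑ i ∈ range n, x ^ (n - 1 - i) * y ^ i := by
  rw [← sub_eq_iff_eq_add', pow_mul_sub_mul_pow_eq_sum, hsx, sub_sub_cancel]
  simp_rw [mul_one]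
  exact sum_congr rfl fun i _ => ((hxy.pow_pow _ i).eq).symm

theorem conj_mul_mul_eq_of_braid {M : Type*} [Semigroup M] {s t a c : M}
    (ha : Commute s a) (hc : Commute s c) (hbraid : s * t * s = t * s * t) :
    s * (a * t * c) * s = a * t * s * (t * c) := by
  calc s * (a * t * c) * s = s * a * t * (c * s) := by simp only [mul_assoc]
    _ = a * (s * t * s) * c := by rw [ha.eq, ← hc.eq]; simp only [mul_assoc]
    _ = a * t * s * (t * c) := by rw [hbraid]; simp only [mul_assoc]

section Trace

variable {A : Type*} [Ring A] {B : Subring A} {s y : A} {x : B} {d : ℕ} (T : A →+ B)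

theorem map_mul_pow_mul_eq_zero (hsx : s * x = y * s - 1) (hxy : Commute (x : A) y)
    (hT1 : ∀ u ∈ AddSubgroup.closure {z : A | ∃ b ∈ B, ∃ b' ∈ B, z = b * s * b'}, T u = 0)
    (hT2 : ∀ b : B, ∀ j : ℕ, j + 2 ≤ d → T ((b : A) * y ^ j) = 0)
    (b : B) {k : ℕ} (hk : k < d) : T (b * y ^ k * s) = 0 := by
  rw [mul_assoc, pow_mul_eq_mul_pow_add_sum hsx hxy, mul_add, mul_sum, map_add, map_sum,
    ← mul_assoc, hT1 _ (AddSubgroup.subset_closure ⟨b, b.2, _, pow_mem x.2 k, rfl⟩), zero_add]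
  refine sum_eq_zero fun i hi => ?_
  rw [← mul_assoc]
  exact_mod_cast hT2 (b * x ^ (k - 1 - i)) i (by grind)

theorem map_conj_mul_pow (hsx : s * x = y * s - 1) (hxy : Commute (x : A) y) (hss : s * s = 1)
    (hT1 : ∀ u ∈ AddSubgroup.closure {z : A | ∃ b ∈ B, ∃ b' ∈ B, z = b * s * b'}, T u = 0)
    (hT2 : ∀ b : B, ∀ j : ℕ, j + 2 ≤ d → T ((b : A) * y ^ j) = 0)
    {b : B} (hb : Commute s b) {m : ℕ} (hm : m < d) :
    T (s * (b * x ^ m : B) * s) = T (b * y ^ m) := by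
  have hconj : s * (b * x ^ m : B) * s
      = b * y ^ m - ∑ i ∈ range m, (b * x ^ (m - 1 - i) : B) * y ^ i * s := by
    push_cast
    rw [← mul_assoc, hb.eq, mul_assoc _ s, mul_assoc, eq_sub_of_add_eq
      (pow_mul_eq_mul_pow_add_sum hsx hxy m).symm,
      sub_mul, mul_assoc _ s, hss, mul_one, mul_sub, sum_mul, mul_sum]
    simp only [mul_assoc]
  rw [hconj, map_sub, map_sum, sum_eq_zero fun i hi => map_mul_pow_mul_eq_zero T hsx hxy hT1 hT2 _
    (by grind), sub_zero]

end Trace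

theorem stmt10_general {A : Type*} [Ring A] (B : Subring A) (B₀ : Subring B)
    (d : ℕ)
    (s y : A) (s' x : B)
    (hsB₀ : ∀ b ∈ B₀, s * (b : A) = (b : A) * s)
    (hbraid : s * (s' : A) * s = (s' : A) * s * (s' : A))
    (hss : s * s = 1)
    (hxy : (x : A) * y = y * (x : A))
    (hsx : s * (x : A) = y * s - 1)
    (T : A →+ B) (T₀ : B →+ B)
    (hT1 : ∀ u ∈ AddSubgroup.closure {z : A | ∃ b ∈ B, ∃ b' ∈ B, z = b * s * b'}, T u = 0)
    (hT2 : ∀ b : B, ∀ j : ℕ, j + 2 ≤ d → T ((b : A) * y ^ j) = 0)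
    (hT3 : ∀ b : B, T ((b : A) * y ^ (d - 1)) = b)
    (hT₀1 : ∀ u ∈ AddSubgroup.closure {z : B | ∃ b₀ ∈ B₀, ∃ b₀' ∈ B₀, z = b₀ * s' * b₀'},
      T₀ u = 0)
    (hT₀2 : ∀ b₀ ∈ B₀, ∀ j : ℕ, j + 2 ≤ d → T₀ (b₀ * x ^ j) = 0)
    (hT₀3 : ∀ b₀ ∈ B₀, T₀ (b₀ * x ^ (d - 1)) = b₀) :
    ∀ b ∈ AddSubgroup.closure
        ({z : B | ∃ b₀ ∈ B₀, ∃ b₀' ∈ B₀, z = b₀ * s' * b₀'} ∪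
          {z : B | ∃ b₀ ∈ B₀, ∃ m : ℕ, m < d ∧ z = b₀ * x ^ m}),
      T (s * (b : A) * s) = T₀ b := by
  let conj : B →+ A :=
    (AddMonoidHom.mulRight s).comp ((AddMonoidHom.mulLeft s).comp B.subtype.toAddMonoidHom)
  refine fun b hb ↦ AddMonoidHom.eqOn_closure (f := T.comp conj) (g := T₀) ?_ hb
  rintro _ (⟨b₀, hb₀, b₀', hb₀', rfl⟩ | ⟨b₀, hb₀, m, hm, rfl⟩)
  · change T (s * ((b₀ * s' * b₀' : B) : A) * s) = T₀ (b₀ * s' * b₀')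
    push_cast
    rw [conj_mul_mul_eq_of_braid (hsB₀ b₀ hb₀) (hsB₀ b₀' hb₀') hbraid,
      hT₀1 _ (AddSubgroup.subset_closure ⟨b₀, hb₀, b₀', hb₀', rfl⟩)]
    exact hT1 _ (AddSubgroup.subset_closure ⟨_, (b₀ * s').2, _, (s' * b₀').2, rfl⟩)
  · change T (s * ((b₀ * x ^ m : B) : A) * s) = T₀ (b₀ * x ^ m)
    rw [map_conj_mul_pow T hsx hxy hss hT1 hT2 (hsB₀ b₀ hb₀) hm]
    obtain hlast | hlow := eq_or_lt_of_le (Nat.le_sub_one_of_lt hm)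
    · rw [hlast, hT3, hT₀3 b₀ hb₀]
    · rw [hT2 b₀ m (by omega), hT₀2 b₀ hb₀ m (by omega)]

/-- Corollary 5.9: `T (s ⬝ b ⬝ s) = T₀ b` for every `b` in the additive subgroup of `B`
generated by `B₀ s' B₀` together with the `b₀ ⬝ x^m`, `0 ≤ m ≤ d - 1`. -/
theorem stmt10 {A : Type*} [Ring A] (B : Subring A) (B₀ : Subring B)
    (d : ℕ) (hd : 1 ≤ d)
    (s y : A) (s' x : B)
    (hsB₀ : ∀ b ∈ B₀, s * (b : A) = (b : A) * s)
    (hxB₀ : ∀ b ∈ B₀, x * b = b * x)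
    (hyB : ∀ b : B, y * (b : A) = (b : A) * y)
    (hbraid : s * (s' : A) * s = (s' : A) * s * (s' : A))
    (hss : s * s = 1)
    (hxy : (x : A) * y = y * (x : A))
    (hsx : s * (x : A) = y * s - 1)
    (T : A →+ B) (T₀ : B →+ B)
    (hT1 : ∀ u ∈ AddSubgroup.closure {z : A | ∃ b ∈ B, ∃ b' ∈ B, z = b * s * b'}, T u = 0)
    (hT2 : ∀ b : B, ∀ j : ℕ, j + 2 ≤ d → T ((b : A) * y ^ j) = 0)
    (hT3 : ∀ b : B, T ((b : A) * y ^ (d - 1)) = b)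
    (hT₀1 : ∀ u ∈ AddSubgroup.closure {z : B | ∃ b₀ ∈ B₀, ∃ b₀' ∈ B₀, z = b₀ * s' * b₀'},
      T₀ u = 0)
    (hT₀2 : ∀ b₀ ∈ B₀, ∀ j : ℕ, j + 2 ≤ d → T₀ (b₀ * x ^ j) = 0)
    (hT₀3 : ∀ b₀ ∈ B₀, T₀ (b₀ * x ^ (d - 1)) = b₀) :
    ∀ b ∈ AddSubgroup.closure
        ({z : B | ∃ b₀ ∈ B₀, ∃ b₀' ∈ B₀, z = b₀ * s' * b₀'} ∪
          {z : B | ∃ b₀ ∈ B₀, ∃ m : ℕ, m < d ∧ z = b₀ * x ^ m}),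
      T (s * (b : A) * s) = T₀ b :=
  stmt10_general B B₀ d s y s' x hsB₀ hbraid hss hxy hsx T T₀ hT1 hT2 hT3 hT₀1 hT₀2 hT₀3
end

section
/- Let F be a field of characteristic zero and n, k ∈ ℕ. In the group algebra F[S_{n+k}] of the symmetric group on {1, …, n+k}, let B be the image of F[S_n] under the embedding induced by letting S_n permute {1, …, n} and fix {n+1, …, n+k} pointwise. Then the centralizer of B in F[S_{n+k}] equals the subalgebra generated by: (i) the center of B, (ii) the permutations that fix {1, …, n} pointwise, and (iii) the Jucys–Murphy elements X_{n+j} := ∑_{i=1}^{n+j−1} (i, n+j) for j = 1, …, k, where (i, m) denotes the transposition of i and m. (The level-one case λ = ω_0 of Corollary 8.3 of the paper, which states that the centralizer of H_n^λ in H_{n+k}^λ is generated by H_k and the center of H_n^λ; in level one H_n^λ ≅ F[S_n] with x_m mapping to the Jucys–Murphy element X_m. This case is Olshanski's centralizer theorem.) -/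
/-!
Let `H ≤ S_α` be the group of permutations fixing every point outside a set `L` of points
(here `L = {1, …, n}`, so that `B = F[H]`). An element commutes with `B` iff it is invariant
under conjugation by `H`; since `|H|` is invertible, such elements are spanned by the orbit sums
`O(g) = ∑_{h ∈ H} h g h⁻¹`. Let `A` be the subalgebra generated by the center of `B`, the
permutations fixing `L` pointwise and the Jucys–Murphy elements `X_m`, `m ∉ L`. We show
`O(g) ∈ A` by induction on the number `d(g)` of points of `L` moved by `g`.

If `d(g) = 0`, then `g` commutes with `H` and `O(g) = |H| g`. Otherwise either `g` has a cycle
`c` inside `L`, and `g = c v`, or `g` sends some `i ∈ L` to `m ∉ L`, and `g = (i m) v`; in both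
cases `d(v) < d(g)`. Then `O(c) O(v)`, resp. `X_m O(v)`, lies in `A`, and every permutation
in its support has `d ≤ d(g)`. A term attaining `d(g)` is a product of two `H`-conjugates whose
moved points in `L` are disjoint, hence an `H`-conjugate of `g`. So the product is a nonzero
multiple of `O(g)` plus an `H`-invariant element supported in lower `d`, which is a combination
of orbit sums already known to lie in `A`.
-/

open Finset

namespace Equiv.Perm

lemma mem_fixingSubgroup_compl_iff {α : Type*} (L : Set α) {σ : Perm α} :
    σ ∈ fixingSubgroup (Perm α) Lᶜ ↔ ∀ x ∉ L, σ x = x := by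
  simp [mem_fixingSubgroup_iff, Perm.smul_def]

lemma apply_mem_iff_of_mem_fixingSubgroup {α : Type*} {L : Set α} {σ : Perm α}
    (hσ : σ ∈ fixingSubgroup (Perm α) Lᶜ) {x : α} : σ x ∈ L ↔ x ∈ L := by
  rw [mem_fixingSubgroup_compl_iff] at hσ
  by_cases hx : x ∈ L
  · refine iff_of_true (by_contra fun h => ?_) hx
    rw [σ.injective (hσ _ h)] at h
    exact h hx
  · rw [hσ x hx]

lemma commute_of_mem_fixingSubgroup_compl {α : Type*} {L : Set α} {σ g : Perm α}
    (hσ : σ ∈ fixingSubgroup (Perm α) Lᶜ) (hg : ∀ x ∈ L, g x = x) : Commute σ g :=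
  Disjoint.commute fun x => by
    by_cases hx : x ∈ L
    · exact .inr (hg x hx)
    · exact .inl ((mem_fixingSubgroup_compl_iff L).1 hσ x hx)

lemma range_viaEmbeddingHom {α β : Type*} (ι : α ↪ β) :
    (viaEmbeddingHom ι).range = fixingSubgroup (Perm β) (Set.range ι)ᶜ := by
  ext σ
  rw [mem_fixingSubgroup_compl_iff]
  refine ⟨?_, fun hσ => ?_⟩
  · rintro ⟨e, rfl⟩ x hx
    exact viaEmbedding_apply_of_notMem e ι x hx
  · set j := Equiv.ofInjective ι ι.injective
    have hσι (x : β) : σ x ∈ Set.range ι ↔ x ∈ Set.range ι :=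
      apply_mem_iff_of_mem_fixingSubgroup ((mem_fixingSubgroup_compl_iff _).2 hσ)
    refine ⟨j.trans ((σ.subtypePerm hσι).trans j.symm), Equiv.ext fun x => ?_⟩
    by_cases hx : x ∈ Set.range ι
    · obtain ⟨y, rfl⟩ := hx
      rw [viaEmbeddingHom_apply, viaEmbedding_apply]
      simp [j, apply_ofInjective_symm]
    · rw [viaEmbeddingHom_apply, viaEmbedding_apply_of_notMem _ _ _ hx, hσ x hx]

variable {α : Type*} [Fintype α] [DecidableEq α]

lemma conj_eq_conj_of_eqOn_support {u σ τ : Perm α} (h : ∀ x ∈ u.support, τ x = σ x) :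
    τ * u * τ⁻¹ = σ * u * σ⁻¹ := by
  have hdisj : (σ⁻¹ * τ).Disjoint u := fun x => by
    by_cases hx : x ∈ u.support
    · left; simp [h x hx]
    · right; simpa using hx
  calc τ * u * τ⁻¹ = σ * ((σ⁻¹ * τ) * u * (σ⁻¹ * τ)⁻¹) * σ⁻¹ := by group
    _ = σ * u * σ⁻¹ := by rw [hdisj.commute.eq, mul_inv_cancel_right]

lemma exists_perm_eqOn_eqOn {s t : Finset α} {σ ρ : Perm α} (hst : _root_.Disjoint s t)
    (himg : _root_.Disjoint (s.map σ.toEmbedding) (t.map ρ.toEmbedding)) :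
    ∃ τ : Perm α, (∀ x ∈ s, τ x = σ x) ∧ ∀ x ∈ t, τ x = ρ x := by
  set f : α → α := fun x => if x ∈ s then σ x else ρ x
  have hf : ∀ x ∈ t, f x = ρ x := fun x hx => if_neg (disjoint_right.1 hst hx)
  have hinj : Set.InjOn f ↑(s ∪ t) := by
    have hne {x y} (hx : x ∈ s) (hy : y ∈ t) : σ x ≠ ρ y := fun hxy =>
      disjoint_left.1 himg (mem_map_of_mem _ hx) (by simp [hxy, hy])
    intro x hx y hy hxy
    simp only [coe_union, Set.mem_union, mem_coe] at hx hy
    by_cases hxs : x ∈ s <;> by_cases hys : y ∈ s <;>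
      simp only [f, hxs, hys, if_true, if_false] at hxy
    · exact σ.injective hxy
    · exact absurd hxy (hne hxs (hy.resolve_left hys))
    · exact absurd hxy.symm (hne hys (hx.resolve_left hxs))
    · exact ρ.injective hxy
  obtain ⟨e, he⟩ := exists_equiv_extend_of_card_eq (t := univ) card_univ.symm (subset_univ _) hinj
  refine ⟨e.trans (Equiv.subtypeUnivEquiv mem_univ), fun x hx => ?_, fun x hx => ?_⟩
  · simpa [f, hx] using he x (mem_union_left _ hx)
  · simpa [hf x hx] using he x (mem_union_right _ hx)

instance (L : Finset α) : DecidablePred (· ∈ fixingSubgroup (Perm α) ((L : Set α)ᶜ)) := fun _ =>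
  decidable_of_iff _ (mem_fixingSubgroup_compl_iff (L : Set α)).symm

variable {L : Finset α}

local notation "H" => fixingSubgroup (Perm α) ((L : Set α)ᶜ)

lemma support_conj_inter {σ : Perm α} (hσ : σ ∈ H) (u : Perm α) :
    (σ * u * σ⁻¹).support ∩ L = (u.support ∩ L).map σ.toEmbedding := by
  have hσL (x : α) : σ x ∈ L ↔ x ∈ L := apply_mem_iff_of_mem_fixingSubgroup hσ
  ext y
  obtain ⟨x, rfl⟩ := σ.surjective y
  simp [support_conj, hσL]

lemma card_support_conj_inter {σ : Perm α} (hσ : σ ∈ H) (u : Perm α) :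
    #((σ * u * σ⁻¹).support ∩ L) = #(u.support ∩ L) := by
  rw [support_conj_inter hσ, card_map]

lemma support_mul_inter_subset (u v : Perm α) :
    (u * v).support ∩ L ⊆ (u.support ∩ L) ∪ (v.support ∩ L) := by
  rw [← union_inter_distrib_right]
  exact inter_subset_inter_right (support_mul_le u v)

lemma card_support_mul_inter_le (u v : Perm α) :
    #((u * v).support ∩ L) ≤ #(u.support ∩ L) + #(v.support ∩ L) :=
  (card_le_card (support_mul_inter_subset u v)).trans (card_union_le _ _)

lemma disjoint_support_inter_of_card_le {u v : Perm α}
    (h : #(u.support ∩ L) + #(v.support ∩ L) ≤ #((u * v).support ∩ L)) :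
    _root_.Disjoint (u.support ∩ L) (v.support ∩ L) := by
  have := card_union_add_card_inter (u.support ∩ L) (v.support ∩ L)
  have := card_le_card (support_mul_inter_subset (L := L) u v)
  rw [disjoint_iff_inter_eq_empty, ← card_eq_zero]
  omega

lemma card_support_swap_inter {i m : α} (hi : i ∈ L) (hm : m ∉ L) :
    #((swap i m).support ∩ L) = 1 := by
  rw [support_swap (ne_of_mem_of_not_mem hi hm), insert_inter_of_mem hi,
    singleton_inter_of_notMem hm, insert_empty, card_singleton]

lemma card_support_swap_mul_inter_lt {g : Perm α} {i : α} (hi : i ∈ L) (hgi : g i ∉ L) :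
    #((swap i (g i) * g).support ∩ L) < #(g.support ∩ L) := by
  have hig : i ∈ g.support ∩ L :=
    mem_inter.2 ⟨mem_support.2 (ne_of_mem_of_not_mem hi hgi).symm, hi⟩
  refine (card_le_card fun y hy => ?_).trans_lt (card_erase_lt_of_mem hig)
  simp only [mem_inter, mem_support, mem_erase, Perm.mul_apply] at hy ⊢
  have hyi : y ≠ i := by
    rintro rfl
    exact hy.1 (swap_apply_right _ _)
  refine ⟨hyi, fun hgy => hy.1 ?_, hy.2⟩
  rw [hgy, swap_apply_of_ne_of_ne hyi (ne_of_mem_of_not_mem hy.2 hgi)]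

lemma exists_mem_fixingSubgroup_eqOn_support {u v σ ρ : Perm α} (hσ : σ ∈ H) (hρ : ρ ∈ H)
    (huv : _root_.Disjoint (u.support ∩ L) (v.support ∩ L))
    (huv' : _root_.Disjoint ((u.support ∩ L).map σ.toEmbedding)
      ((v.support ∩ L).map ρ.toEmbedding)) :
    ∃ τ ∈ H, (∀ x ∈ u.support, τ x = σ x) ∧ ∀ x ∈ v.support, τ x = ρ x := by
  have hσL (x : α) : σ x ∈ L ↔ x ∈ L := apply_mem_iff_of_mem_fixingSubgroup hσ
  have hρL (x : α) : ρ x ∈ L ↔ x ∈ L := apply_mem_iff_of_mem_fixingSubgroup hρ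
  rw [mem_fixingSubgroup_compl_iff] at hσ hρ
  have hdisj : _root_.Disjoint (u.support ∩ L) (v.support ∪ Lᶜ) := by
    refine disjoint_left.2 fun x hx hx' => ?_
    rw [mem_inter] at hx
    rcases mem_union.1 hx' with hxv | hxL
    · exact disjoint_left.1 huv (mem_inter.2 hx) (mem_inter.2 ⟨hxv, hx.2⟩)
    · exact mem_compl.1 hxL hx.2
  have hdisj' : _root_.Disjoint ((u.support ∩ L).map σ.toEmbedding)
      ((v.support ∪ Lᶜ).map ρ.toEmbedding) := by
    refine disjoint_left.2 fun y hy hy' => ?_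
    obtain ⟨x, hx, rfl⟩ := mem_map.1 hy
    obtain ⟨z, hz, hzx⟩ := mem_map.1 hy'
    simp only [coe_toEmbedding] at hzx
    have hzL : z ∈ L := (hρL z).1 (hzx ▸ (hσL x).2 (mem_inter.1 hx).2)
    have hzv : z ∈ v.support := (mem_union.1 hz).resolve_right (notMem_compl.2 hzL)
    exact disjoint_left.1 huv' hy (hzx ▸ mem_map_of_mem _ (mem_inter.2 ⟨hzv, hzL⟩))
  obtain ⟨τ, hτu, hτv⟩ := exists_perm_eqOn_eqOn hdisj hdisj'
  refine ⟨τ, (mem_fixingSubgroup_compl_iff _).2 fun x hx =>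
    (hτv x (mem_union_right _ (mem_compl.2 hx))).trans (hρ x hx), fun x hx => ?_,
    fun x hx => hτv x (mem_union_left _ hx)⟩
  by_cases hxL : x ∈ L
  · exact hτu x (mem_inter.2 ⟨hx, hxL⟩)
  · rw [hτv x (mem_union_right _ (mem_compl.2 hxL)), hρ x hxL, hσ x hxL]

/-- If `u * v` and `σ u σ⁻¹ * ρ v ρ⁻¹` both move as many points of `L` as `u` and `v` together,
the moved points of the two factors are disjoint in both products, so that a single `τ ∈ H`
can act as `σ` on the support of `u` and as `ρ` on that of `v`. -/
lemma exists_mem_conj_eq_conj_mul_conj {u v σ ρ : Perm α} (hσ : σ ∈ H) (hρ : ρ ∈ H)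
    (huv : #(u.support ∩ L) + #(v.support ∩ L) ≤ #((u * v).support ∩ L))
    (h : #(u.support ∩ L) + #(v.support ∩ L) ≤ #((σ * u * σ⁻¹ * (ρ * v * ρ⁻¹)).support ∩ L)) :
    ∃ τ ∈ H, τ * (u * v) * τ⁻¹ = σ * u * σ⁻¹ * (ρ * v * ρ⁻¹) := by
  have h' := disjoint_support_inter_of_card_le (L := L) (u := σ * u * σ⁻¹) (v := ρ * v * ρ⁻¹)
    (by rwa [card_support_conj_inter hσ, card_support_conj_inter hρ])
  rw [support_conj_inter hσ, support_conj_inter hρ] at h'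
  obtain ⟨τ, hτ, hτu, hτv⟩ := exists_mem_fixingSubgroup_eqOn_support hσ hρ
    (disjoint_support_inter_of_card_le huv) h'
  refine ⟨τ, hτ, ?_⟩
  simp only [← conj_eq_conj_of_eqOn_support hτu, ← conj_eq_conj_of_eqOn_support hτv, mul_assoc,
    inv_mul_cancel_left]

end Equiv.Perm

namespace MonoidAlgebra

section OrbitSum

variable {k G : Type*} [Field k] [Group G]

lemma coeff_sum_of [DecidableEq G] {ι : Type*} (s : Finset ι) (f : ι → G) (g : G) :
    (∑ i ∈ s, of k G (f i)).coeff g = #{i ∈ s | f i = g} := by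
  simp [coeff_sum, Finsupp.single_apply, sum_boole]

lemma exists_eq_of_coeff_sum_of_ne_zero {ι : Type*} {s : Finset ι} {f : ι → G} {g : G}
    (h : (∑ i ∈ s, of k G (f i)).coeff g ≠ 0) : ∃ i ∈ s, f i = g := by
  classical
  by_contra! hne
  rw [coeff_sum_of, filter_false_of_mem hne] at h
  exact h (by simp)

lemma coeff_sum_of_ne_zero [CharZero k] {ι : Type*} {s : Finset ι} {f : ι → G} {i : ι}
    (hi : i ∈ s) : (∑ j ∈ s, of k G (f j)).coeff (f i) ≠ 0 := by
  classical
  rw [coeff_sum_of, Nat.cast_ne_zero, ← Nat.pos_iff_ne_zero, card_pos]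
  exact ⟨i, mem_filter.2 ⟨hi, rfl⟩⟩

lemma mem_centralizer_of_image_iff {H : Subgroup G} {a : MonoidAlgebra k G} :
    a ∈ Subalgebra.centralizer k (of k G '' H) ↔ ∀ h ∈ H, of k G h * a = a * of k G h := by
  simp [Subalgebra.mem_centralizer_iff]

lemma coeff_conj_of_mem_centralizer {H : Subgroup G} {a : MonoidAlgebra k G}
    (ha : a ∈ Subalgebra.centralizer k (of k G '' H)) {h : G} (hh : h ∈ H) (g : G) :
    a.coeff (h * g * h⁻¹) = a.coeff g := by
  simpa [of_apply] using
    (congr_arg (fun x => x.coeff (h * g)) (mem_centralizer_of_image_iff.1 ha h hh)).symm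

lemma centralizer_range_mapDomainAlgHom {K : Type*} [Group K] (φ : K →* G) :
    Subalgebra.centralizer k (Set.range (mapDomainAlgHom k k φ)) =
      Subalgebra.centralizer k (of k G '' φ.range) := by
  refine le_antisymm (Subalgebra.centralizer_le k _ _ ?_) ?_
  · rintro _ ⟨_, ⟨x, rfl⟩, rfl⟩
    exact ⟨of k K x, by simp [of_apply, mapDomain_single]⟩
  · set C := Subalgebra.centralizer k
      (Subalgebra.centralizer k (of k G '' φ.range) : Set (MonoidAlgebra k G))
    have hsub : Set.range (mapDomainAlgHom k k φ) ⊆ C := by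
      rintro _ ⟨x, rfl⟩
      induction x using MonoidAlgebra.induction_on with
      | of x =>
        exact Set.subset_centralizer_centralizer
          ⟨φ x, ⟨x, rfl⟩, by simp [of_apply, mapDomain_single]⟩
      | add x y hx hy => simpa only [map_add, SetLike.mem_coe] using C.add_mem hx hy
      | smul r x hx => simpa only [map_smul, SetLike.mem_coe] using C.smul_mem hx r
    simpa [C] using Subalgebra.centralizer_le k _ _ hsub

variable (k) (H : Subgroup G) [Fintype H]

noncomputable def orbitSum (g : G) : MonoidAlgebra k G :=
  ∑ h : H, of k G (h * g * (h : G)⁻¹)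

variable {k H}

lemma orbitSum_mem_centralizer (g : G) :
    orbitSum k H g ∈ Subalgebra.centralizer k (of k G '' H) := by
  refine mem_centralizer_of_image_iff.2 fun h hh => ?_
  rw [orbitSum, mul_sum, sum_mul]
  refine Fintype.sum_equiv (Equiv.mulLeft ⟨h, hh⟩) _ _ fun x => ?_
  rw [← map_mul, ← map_mul]
  simp only [Equiv.coe_mulLeft, Subgroup.coe_mul, mul_inv_rev]
  group

lemma orbitSum_mem_range_mapDomainAlgHom {K : Type*} [Group K] (φ : K →* G) (hH : H ≤ φ.range)
    {c : G} (hc : c ∈ H) : orbitSum k H c ∈ (mapDomainAlgHom k k φ).range := by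
  refine Subalgebra.sum_mem _ fun h _ => ?_
  obtain ⟨x, hx⟩ := hH (H.mul_mem (H.mul_mem h.2 hc) (H.inv_mem h.2))
  exact ⟨of k K x, by simp [of_apply, hx]⟩

lemma card_smul_eq_sum_orbitSum {a : MonoidAlgebra k G}
    (ha : a ∈ Subalgebra.centralizer k (of k G '' H)) :
    Fintype.card H • a = ∑ g ∈ a.coeff.support, a.coeff g • orbitSum k H g := by
  have hconj (h : G) : of k G h * a * of k G h⁻¹ =
      ∑ g ∈ a.coeff.support, a.coeff g • of k G (h * g * h⁻¹) := by
    conv_lhs => rw [← a.sum_coeff_single]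
    simp [Finsupp.sum, mul_sum, sum_mul, of_apply, smul_single]
  have hfix (h : H) : of k G h * a * of k G h⁻¹ = a := by
    rw [mem_centralizer_of_image_iff.1 ha h h.2, mul_assoc, ← map_mul, mul_inv_cancel, map_one,
      mul_one]
  calc Fintype.card H • a = ∑ h : H, of k G h * a * of k G h⁻¹ := by
        rw [sum_congr rfl fun h _ => hfix h, sum_const, card_univ]
    _ = ∑ g ∈ a.coeff.support, a.coeff g • orbitSum k H g := by
      simp only [hconj, orbitSum, smul_sum]
      exact sum_comm

lemma exists_conj_eq_of_coeff_orbitSum_ne_zero {g h : G} (hh : (orbitSum k H g).coeff h ≠ 0) :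
    ∃ σ ∈ H, σ * g * σ⁻¹ = h := by
  obtain ⟨σ, -, hσ⟩ := exists_eq_of_coeff_sum_of_ne_zero hh
  exact ⟨σ, σ.2, hσ⟩

variable [CharZero k]

lemma mem_of_forall_orbitSum_mem {A : Subalgebra k (MonoidAlgebra k G)} {a : MonoidAlgebra k G}
    (ha : a ∈ Subalgebra.centralizer k (of k G '' H))
    (hA : ∀ g ∈ a.coeff.support, orbitSum k H g ∈ A) : a ∈ A := by
  have hcard : (Fintype.card H : k) ≠ 0 := Nat.cast_ne_zero.2 Fintype.card_ne_zero
  have hmem : (Fintype.card H : k) • a ∈ A := by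
    rw [Nat.cast_smul_eq_nsmul, card_smul_eq_sum_orbitSum ha]
    exact A.sum_mem fun g hg => A.smul_mem (hA g hg) _
  simpa [smul_smul, inv_mul_cancel₀ hcard] using A.smul_mem hmem (Fintype.card H : k)⁻¹

lemma coeff_orbitSum_self_ne_zero (g : G) : (orbitSum k H g).coeff g ≠ 0 := by
  have := coeff_sum_of_ne_zero (k := k) (s := univ) (f := fun h : H => h * g * (h : G)⁻¹)
    (mem_univ 1)
  simpa only [orbitSum, OneMemClass.coe_one, one_mul, inv_one, mul_one] using this

/-- Subtracting from `D` the multiple of `orbitSum k H g` with the same coefficient at `g` kills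
all its terms of degree `d g`, since both are constant on `H`-conjugacy classes. -/
lemma orbitSum_mem_of_coeff_ne_zero {A : Subalgebra k (MonoidAlgebra k G)} (d : G → ℕ) {g : G}
    (IH : ∀ h, d h < d g → orbitSum k H h ∈ A) {D : MonoidAlgebra k G}
    (hDA : D ∈ A) (hDC : D ∈ Subalgebra.centralizer k (of k G '' H)) (hDg : D.coeff g ≠ 0)
    (hD : ∀ h, D.coeff h ≠ 0 → d h < d g ∨ ∃ σ ∈ H, σ * g * σ⁻¹ = h) :
    orbitSum k H g ∈ A := by
  set c := D.coeff g / (orbitSum k H g).coeff g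
  have hc : c ≠ 0 := div_ne_zero hDg (coeff_orbitSum_self_ne_zero g)
  set D' := D - c • orbitSum k H g
  have hD'C : D' ∈ Subalgebra.centralizer k (of k G '' H) :=
    sub_mem hDC (Subalgebra.smul_mem _ (orbitSum_mem_centralizer g) c)
  have hD'conj {σ : G} (hσ : σ ∈ H) : D'.coeff (σ * g * σ⁻¹) = 0 := by
    rw [coeff_conj_of_mem_centralizer hD'C hσ]
    simp [D', c, div_mul_cancel₀ _ (coeff_orbitSum_self_ne_zero (k := k) (H := H) g)]
  have hD'A : D' ∈ A := by
    refine mem_of_forall_orbitSum_mem hD'C fun h hh => IH h ?_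
    rw [Finsupp.mem_support_iff] at hh
    have hconj : ¬ ∃ σ ∈ H, σ * g * σ⁻¹ = h := by
      rintro ⟨σ, hσ, rfl⟩
      exact hh (hD'conj hσ)
    by_cases hDh : D.coeff h = 0
    · refine absurd (exists_conj_eq_of_coeff_orbitSum_ne_zero (k := k) fun hE => hh ?_) hconj
      simp [D', hDh, hE]
    · exact (hD h hDh).resolve_right hconj
  have hE : orbitSum k H g = c⁻¹ • (D - D') := by
    rw [sub_sub_cancel, smul_smul, inv_mul_cancel₀ hc, one_smul]
  rw [hE]
  exact A.smul_mem (sub_mem hDA hD'A) _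

end OrbitSum

open Equiv Perm

lemma of_mem_centralizer_of_forall_mem_eq {k α : Type*} [Field k] {L : Set α} {g : Perm α}
    (hg : ∀ x ∈ L, g x = x) :
    of k _ g ∈ Subalgebra.centralizer k (of k _ '' fixingSubgroup (Perm α) Lᶜ) :=
  mem_centralizer_of_image_iff.2 fun σ hσ => by
    rw [← map_mul, ← map_mul, (commute_of_mem_fixingSubgroup_compl hσ hg).eq]

section FixingSubgroup

variable {k α : Type*} [Field k] [Fintype α] [DecidableEq α] {L : Finset α}

local notation "H" => fixingSubgroup (Perm α) ((L : Set α)ᶜ)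

lemma orbitSum_eq_card_smul_of {g : Perm α} (hg : ∀ x ∈ L, g x = x) :
    orbitSum k H g = Fintype.card H • of k _ g := by
  have hconj (σ : H) : (σ : Perm α) * g * (σ : Perm α)⁻¹ = g := by
    rw [(commute_of_mem_fixingSubgroup_compl σ.2 hg).eq, mul_inv_cancel_right]
  simp [orbitSum, hconj]

variable [CharZero k] {A : Subalgebra k (MonoidAlgebra k (Perm α))} {g : Perm α}

/-- `(∑ i ∈ s, f i) * orbitSum k H v` serves as the `D` of `orbitSum_mem_of_coeff_ne_zero`, the
degree being the number of moved points in `L`. -/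
lemma orbitSum_mem_of_mul_eq
    (IH : ∀ h : Perm α, #(h.support ∩ L) < #(g.support ∩ L) → orbitSum k H h ∈ A) {u v : Perm α}
    (huv : u * v = g) (hcard : #(u.support ∩ L) + #(v.support ∩ L) ≤ #(g.support ∩ L))
    (hu : (u.support ∩ L).Nonempty) {ι : Type*} {s : Finset ι} {f : ι → Perm α}
    (hsA : ∑ i ∈ s, of k _ (f i) ∈ A)
    (hsC : ∑ i ∈ s, of k _ (f i) ∈ Subalgebra.centralizer k (of k _ '' H))
    {i₀ : ι} (hi₀ : i₀ ∈ s) (hfi₀ : f i₀ = u)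
    (hf : ∀ i ∈ s, #((f i).support ∩ L) < #(u.support ∩ L) ∨ ∃ σ ∈ H, σ * u * σ⁻¹ = f i) :
    orbitSum k H g ∈ A := by
  have hD : (∑ i ∈ s, of k _ (f i)) * orbitSum k H v =
      ∑ p ∈ s ×ˢ (univ : Finset H), of k _ (f p.1 * (p.2 * v * (p.2 : Perm α)⁻¹)) := by
    simp only [orbitSum, sum_mul_sum, ← map_mul, sum_product]
  have hv : #(v.support ∩ L) < #(g.support ∩ L) := by
    have := hu.card_pos
    omega
  refine orbitSum_mem_of_coeff_ne_zero (fun h => #(h.support ∩ L)) IH (A.mul_mem hsA (IH v hv))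
    (mul_mem hsC (orbitSum_mem_centralizer v)) ?_ fun h hh => ?_
  · rw [hD]
    have := coeff_sum_of_ne_zero (k := k)
      (f := fun p : ι × H => f p.1 * (p.2 * v * (p.2 : Perm α)⁻¹))
      (mem_product.2 ⟨hi₀, mem_univ _⟩ : (i₀, (1 : H)) ∈ s ×ˢ univ)
    simpa [hfi₀, huv] using this
  rw [hD] at hh
  obtain ⟨⟨i, ρ⟩, hp, rfl⟩ := exists_eq_of_coeff_sum_of_ne_zero hh
  dsimp only
  have hle := card_support_mul_inter_le (L := L) (f i) (ρ * v * (ρ : Perm α)⁻¹)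
  rw [card_support_conj_inter ρ.2] at hle
  rcases hf i (mem_product.1 hp).1 with hlt | ⟨σ, hσ, hσu⟩
  · exact .inl (by omega)
  rw [← hσu, card_support_conj_inter hσ] at hle
  rw [← hσu]
  by_cases hlt : #((σ * u * σ⁻¹ * (ρ * v * (ρ : Perm α)⁻¹)).support ∩ L) < #(g.support ∩ L)
  · exact .inl hlt
  obtain ⟨τ, hτ, hτg⟩ := exists_mem_conj_eq_conj_mul_conj hσ ρ.2 (huv ▸ hcard) (by omega)
  exact .inr ⟨τ, hτ, huv ▸ hτg⟩

lemma orbitSum_mem_of_mapsTo (hA : ∀ c ∈ H, orbitSum k H c ∈ A)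
    (IH : ∀ h : Perm α, #(h.support ∩ L) < #(g.support ∩ L) → orbitSum k H h ∈ A)
    {x : α} (hx : x ∈ g.support ∩ L) (hgL : Set.MapsTo g L L) :
    orbitSum k H g ∈ A := by
  rw [mem_inter] at hx
  set c := g.cycleOf x
  set v := g * c⁻¹
  have hvc : v.Disjoint c :=
    disjoint_mul_inv_of_mem_cycleFactorsFinset (cycleOf_mem_cycleFactorsFinset_iff.2 hx.1)
  have hcv : c * v = g := by rw [← hvc.commute.eq, inv_mul_cancel_right]
  have hc : c ∈ H := (mem_fixingSubgroup_compl_iff _).2 fun y hy =>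
    cycleOf_apply_of_not_sameCycle fun hxy => hy <| by
      obtain ⟨m, rfl⟩ := hxy.exists_nat_pow_eq
      rw [coe_pow]
      exact hgL.iterate m hx.2
  have hcard : #(c.support ∩ L) + #(v.support ∩ L) = #(g.support ∩ L) := by
    rw [← hcv, hvc.symm.support_mul, union_inter_distrib_right, card_union_of_disjoint]
    exact (disjoint_iff_disjoint_support.1 hvc.symm).mono inter_subset_left inter_subset_left
  have hxc : x ∈ c.support ∩ L := mem_inter.2 ⟨mem_support_cycleOf_iff.2 ⟨.refl _ _, hx.1⟩, hx.2⟩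
  exact orbitSum_mem_of_mul_eq IH hcv hcard.le ⟨x, hxc⟩ (hA c hc) (orbitSum_mem_centralizer c)
    (mem_univ 1) (by simp) fun σ _ => .inr ⟨σ, σ.2, rfl⟩

end FixingSubgroup

section JucysMurphy

variable {k α : Type*} [Field k] [LinearOrder α] [LocallyFiniteOrderBot α] {L : Finset α}

local notation "H" => fixingSubgroup (Perm α) ((L : Set α)ᶜ)

variable (k) in
noncomputable def jucysMurphy (m : α) : MonoidAlgebra k (Perm α) :=
  ∑ i ∈ Iio m, of k _ (swap i m)

lemma jucysMurphy_mem_centralizer {m : α} (hm : ∀ x ∈ L, x < m) :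
    jucysMurphy k m ∈ Subalgebra.centralizer k (of k _ '' H) := by
  refine mem_centralizer_of_image_iff.2 fun σ hσ => ?_
  have hσL (x : α) : σ x ∈ L ↔ x ∈ L := apply_mem_iff_of_mem_fixingSubgroup hσ
  rw [mem_fixingSubgroup_compl_iff] at hσ
  have hσm : σ m = m := hσ m fun hmL => lt_irrefl m (hm m hmL)
  have hσIio (x : α) : σ x ∈ Iio m ↔ x ∈ Iio m := by
    by_cases hx : x ∈ L
    · exact iff_of_true (mem_Iio.2 (hm _ ((hσL x).2 hx))) (mem_Iio.2 (hm x hx))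
    · rw [hσ x hx]
  rw [jucysMurphy, mul_sum, sum_mul]
  refine sum_nbij' σ ⇑σ⁻¹ (fun x hx => (hσIio x).2 hx) (fun x hx => ?_) (by simp) (by simp)
    fun i _ => ?_
  · rwa [← hσIio, ← Perm.mul_apply, mul_inv_cancel, one_apply]
  · rw [← map_mul, ← map_mul, ← hσm, swap_apply_apply, hσm, inv_mul_cancel_right]

variable [Fintype α] [CharZero k] {A : Subalgebra k (MonoidAlgebra k (Perm α))} {g : Perm α}

lemma orbitSum_mem_of_apply_notMem (hA : ∀ m ∉ L, jucysMurphy k m ∈ A)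
    (hL : ∀ x ∈ L, ∀ y ∉ L, x < y)
    (IH : ∀ h : Perm α, #(h.support ∩ L) < #(g.support ∩ L) → orbitSum k H h ∈ A)
    {i : α} (hi : i ∈ L) (hgi : g i ∉ L) :
    orbitSum k H g ∈ A := by
  have him : i ≠ g i := ne_of_mem_of_not_mem hi hgi
  have hcard : #((swap i (g i)).support ∩ L) + #((swap i (g i) * g).support ∩ L) ≤
      #(g.support ∩ L) := by
    have := card_support_swap_mul_inter_lt hi hgi
    rw [card_support_swap_inter hi hgi]
    omega
  refine orbitSum_mem_of_mul_eq IH (swap_mul_self_mul i (g i) g) hcard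
    ⟨i, mem_inter.2 ⟨by simp [support_swap him], hi⟩⟩ (hA _ hgi)
    (jucysMurphy_mem_centralizer fun x hx => hL x hx _ hgi) (mem_Iio.2 (hL i hi _ hgi)) rfl
    fun a _ => ?_
  by_cases haL : a ∈ L
  · refine .inr ⟨swap i a, (mem_fixingSubgroup_compl_iff _).2 fun y hy => ?_, ?_⟩
    · exact swap_apply_of_ne_of_ne (ne_of_mem_of_not_mem hi hy).symm
        (ne_of_mem_of_not_mem haL hy).symm
    · rw [← swap_apply_apply, swap_apply_left,
        swap_apply_of_ne_of_ne him.symm (ne_of_mem_of_not_mem haL hgi).symm]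
  · refine .inl ?_
    have : (swap a (g i)).support ∩ L = ∅ := eq_empty_of_forall_notMem fun y hy => by
      rw [mem_inter, mem_support] at hy
      exact hy.1 (swap_apply_of_ne_of_ne (ne_of_mem_of_not_mem hy.2 haL)
        (ne_of_mem_of_not_mem hy.2 hgi))
    rw [this, card_support_swap_inter hi hgi, card_empty]
    exact one_pos

lemma centralizer_le_of_jucysMurphy_mem (hL : ∀ x ∈ L, ∀ y ∉ L, x < y)
    (hH : ∀ c ∈ H, orbitSum k H c ∈ A) (hfix : ∀ g : Perm α, (∀ x ∈ L, g x = x) → of k _ g ∈ A)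
    (hJM : ∀ m ∉ L, jucysMurphy k m ∈ A) :
    Subalgebra.centralizer k (of k _ '' H) ≤ A := by
  suffices ∀ g, orbitSum k H g ∈ A from fun a ha => mem_of_forall_orbitSum_mem ha fun g _ => this g
  intro g
  induction hn : #(g.support ∩ L) using Nat.strong_induction_on generalizing g with
  | _ n ih =>
  have IH (h : Perm α) (hh : #(h.support ∩ L) < #(g.support ∩ L)) : orbitSum k H h ∈ A :=
    ih _ (hn ▸ hh) h rfl
  obtain hempty | ⟨x, hx⟩ := (g.support ∩ L).eq_empty_or_nonempty
  · have hg : ∀ x ∈ L, g x = x := fun x hx => by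
      by_contra hgx
      exact notMem_empty x (hempty ▸ mem_inter.2 ⟨mem_support.2 hgx, hx⟩)
    rw [orbitSum_eq_card_smul_of hg]
    exact nsmul_mem (hfix g hg) _
  by_cases hgL : ∃ i ∈ L, g i ∉ L
  · obtain ⟨i, hi, hgi⟩ := hgL
    exact orbitSum_mem_of_apply_notMem hJM hL IH hi hgi
  · exact orbitSum_mem_of_mapsTo hH IH hx fun y hy => by_contra fun hgy => hgL ⟨y, hy, hgy⟩

end JucysMurphy

end MonoidAlgebra

open MonoidAlgebra Equiv Perm

lemma Fin.range_viaEmbeddingHom_castLEEmb {n m : ℕ} (h : n ≤ m) :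
    (viaEmbeddingHom (Fin.castLEEmb h)).range =
      fixingSubgroup (Perm (Fin m)) ((({x | (x : ℕ) < n} : Finset (Fin m)) : Set (Fin m)))ᶜ := by
  rw [range_viaEmbeddingHom, Fin.coe_castLEEmb, Fin.range_castLE h]
  congr
  ext x
  simp

lemma Fin.sum_swap_eq_jucysMurphy (k : Type*) [Field k] {n m : ℕ} (j : Fin m) :
    ∑ i ∈ univ.filter (fun i : Fin (n + m) => (i : ℕ) < n + (j : ℕ)),
      of k _ (swap i ⟨n + (j : ℕ), Nat.add_lt_add_left j.isLt n⟩) =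
    jucysMurphy k (⟨n + (j : ℕ), Nat.add_lt_add_left j.isLt n⟩ : Fin (n + m)) := by
  rw [jucysMurphy]
  congr 1
  ext i
  simp [Fin.lt_def]

/-- Olshanski's centralizer theorem (the level-one case of Corollary 8.3): in `F[S_{n+k}]`,
the centralizer of the image `B` of `F[S_n]` equals the subalgebra generated by the center
of `B`, the permutations fixing `{1, …, n}` pointwise, and the Jucys–Murphy elements
`X_{n+j} = ∑_{i=1}^{n+j-1} (i, n+j)`, `j = 1, …, k`. -/
theorem stmt14 (F : Type*) [Field F] [CharZero F] (n k : ℕ)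
    (B : Set (MonoidAlgebra F (Equiv.Perm (Fin (n + k)))))
    (hB : B = Set.range (MonoidAlgebra.mapDomainAlgHom F F
        (Equiv.Perm.viaEmbeddingHom (Fin.castLEEmb (Nat.le_add_right n k))))) :
    Subalgebra.centralizer F B =
      Algebra.adjoin F
        ({a | a ∈ B ∧ ∀ b ∈ B, a * b = b * a} ∪
          (MonoidAlgebra.of F (Equiv.Perm (Fin (n + k))) ''
            {g | ∀ i : Fin (n + k), (i : ℕ) < n → g i = i}) ∪
          {z | ∃ j : Fin k,
            z = ∑ i ∈ Finset.univ.filter (fun i : Fin (n + k) => (i : ℕ) < n + (j : ℕ)),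
              MonoidAlgebra.of F (Equiv.Perm (Fin (n + k)))
                (Equiv.swap i ⟨n + (j : ℕ), Nat.add_lt_add_left j.isLt n⟩)}) := by
  subst hB
  set L : Finset (Fin (n + k)) := {x | (x : ℕ) < n}
  have hC := centralizer_range_mapDomainAlgHom (k := F)
    (viaEmbeddingHom (Fin.castLEEmb (Nat.le_add_right n k)))
  rw [Fin.range_viaEmbeddingHom_castLEEmb] at hC
  have hL : ∀ x ∈ L, ∀ y ∉ L, x < y := fun x hx y hy => by
    simp only [L, mem_filter, mem_univ, true_and, not_lt] at hx hy
    exact Fin.lt_def.2 (by omega)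
  refine le_antisymm ?_ (Algebra.adjoin_le ?_)
  · rw [hC]
    refine centralizer_le_of_jucysMurphy_mem hL (fun c hc => ?_) (fun g hg => ?_) fun m hm => ?_
    · refine Algebra.subset_adjoin (.inl (.inl ⟨orbitSum_mem_range_mapDomainAlgHom _
        (Fin.range_viaEmbeddingHom_castLEEmb _).ge hc, fun b hb => ?_⟩))
      exact ((Subalgebra.mem_centralizer_iff F).1 (hC ▸ orbitSum_mem_centralizer c) b hb).symm
    · exact Algebra.subset_adjoin (.inl (.inr ⟨g, fun i hi => hg i (by simpa [L] using hi), rfl⟩))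
    · simp only [mem_filter, mem_univ, true_and, not_lt] at hm
      obtain ⟨j, rfl⟩ : ∃ j : Fin k, ⟨n + (j : ℕ), Nat.add_lt_add_left j.isLt n⟩ = m :=
        ⟨⟨m - n, by omega⟩, Fin.ext (by simp; omega)⟩
      rw [← Fin.sum_swap_eq_jucysMurphy]
      exact Algebra.subset_adjoin (.inr ⟨j, rfl⟩)
  · rintro a ((⟨-, ha⟩ | ⟨g, hg, rfl⟩) | ⟨j, rfl⟩)
    · exact (Subalgebra.mem_centralizer_iff F).2 fun b hb => (ha b hb).symm
    · rw [hC]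
      exact of_mem_centralizer_of_forall_mem_eq fun x hx => hg x (by simpa [L] using hx)
    · rw [hC, Fin.sum_swap_eq_jucysMurphy]
      exact jucysMurphy_mem_centralizer fun x hx => hL x hx _ (by simp [L])
end
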